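/- For an isotropic distribution on {0,1}^n (n ≥ 2), the variance of the weight equals n[F_{n−1} − n F_{n−1}² + (n−1) F_{n−2}], and consequently F_{n−2} ≥ (n−1)^{−1}(n F_{n−1} − 1) F_{n−1}. -/

import Mathlib

/-!
Pascal's rule splits the binomial sum `F_{a+1}` into `F_a` plus the same sum with `p` shifted by
one, so the shifted sums are finite differences of `F`. The identity
`k^{(j)} C(a+j, k) = (a+j)^{(j)} C(a, k-j)` for falling factorials turns the factorial moments
of the weight into such shifted sums: `μ₁ = n (1 - F_{n-1})` and
`μ₂ - μ₁ = n (n-1) (1 - 2 F_{n-1} + F_{n-2})`, which gives the variance formula. The inequality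
is the nonnegativity of the variance, i.e. Jensen's inequality for the square.
-/

open Finset

theorem Nat.descFactorial_mul_choose_add (a i j : ℕ) :
    (i + j).descFactorial j * (a + j).choose (i + j) = (a + j).descFactorial j * a.choose i := by
  have h := Nat.choose_mul (n := a + j) (Nat.le_add_left j i)
  simp only [Nat.add_sub_cancel] at h
  rw [Nat.descFactorial_eq_factorial_mul_choose, Nat.descFactorial_eq_factorial_mul_choose,
    mul_assoc, mul_comm (Nat.choose _ _), h, mul_assoc]

section BinomSum

variable {R : Type*} [CommRing R] (p : ℕ → R)

def binomSum (a : ℕ) : R :=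
  ∑ k ∈ range (a + 1), (a.choose k : R) * p k

theorem binomSum_succ (a : ℕ) :
    binomSum p (a + 1) = binomSum p a + binomSum (fun k ↦ p (k + 1)) a :=
  sum_choose_succ_mul (fun i _ ↦ p i) a

theorem binomSum_shift_one (a : ℕ) :
    binomSum (fun k ↦ p (k + 1)) a = binomSum p (a + 1) - binomSum p a := by
  rw [binomSum_succ]; ring

theorem binomSum_shift_two (a : ℕ) :
    binomSum (fun k ↦ p (k + 2)) a =
      binomSum p (a + 2) - 2 * binomSum p (a + 1) + binomSum p a := by
  rw [binomSum_shift_one (fun k ↦ p (k + 1)), binomSum_shift_one, binomSum_shift_one]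
  ring

theorem sum_descFactorial_mul_choose_mul (a j : ℕ) :
    ∑ k ∈ range (a + j + 1), (k.descFactorial j : R) * ((a + j).choose k : R) * p k =
      (a + j).descFactorial j * binomSum (fun i ↦ p (i + j)) a := by
  rw [show a + j + 1 = j + (a + 1) by omega, sum_range_add,
    sum_eq_zero fun k hk ↦ by simp [Nat.descFactorial_eq_zero_iff_lt.2 (mem_range.1 hk)],
    zero_add, binomSum, mul_sum]
  refine sum_congr rfl fun i _ ↦ ?_
  have h := congrArg (Nat.cast (R := R)) (Nat.descFactorial_mul_choose_add a i j)
  push_cast at h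
  rw [add_comm j i]
  linear_combination p (i + j) * h

theorem sum_mul_choose_mul (a : ℕ) :
    ∑ k ∈ range (a + 1 + 1), (k : R) * ((a + 1).choose k : R) * p k =
      (a + 1) * (binomSum p (a + 1) - binomSum p a) := by
  simpa [binomSum_shift_one] using sum_descFactorial_mul_choose_mul p a 1

theorem sum_sq_mul_choose_mul (a : ℕ) :
    ∑ k ∈ range (a + 2 + 1), (k : R) ^ 2 * ((a + 2).choose k : R) * p k =
      (a + 2) * (binomSum p (a + 2) - binomSum p (a + 1)) +
        (a + 2) * (a + 1) * (binomSum p (a + 2) - 2 * binomSum p (a + 1) + binomSum p a) := by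
  have hsq (k : ℕ) : (k : R) ^ 2 = (k.descFactorial 2 : R) + k := by
    rw [Nat.cast_descFactorial_two]; ring
  simp only [hsq, add_mul, sum_add_distrib]
  rw [sum_descFactorial_mul_choose_mul p a 2, binomSum_shift_two, sum_mul_choose_mul p (a + 1),
    Nat.cast_descFactorial_two]
  push_cast
  ring

end BinomSum

theorem sq_sum_mul_le_sum_sq_mul {ι R : Type*} [CommSemiring R] [LinearOrder R]
    [IsStrictOrderedRing R] [ExistsAddOfLE R] (s : Finset ι) (x w : ι → R)
    (hw : ∀ i ∈ s, 0 ≤ w i) (hw1 : ∑ i ∈ s, w i = 1) :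
    (∑ i ∈ s, x i * w i) ^ 2 ≤ ∑ i ∈ s, x i ^ 2 * w i := by
  simpa [hw1] using sum_sq_le_sum_mul_sum_of_sq_le_mul s hw
    (fun i hi ↦ mul_nonneg (sq_nonneg (x i)) (hw i hi)) (fun i _ ↦ (by ring : _ = _).le)

/-- the variance of the weight equals
`n[F_{n−1} − n F_{n−1}² + (n−1) F_{n−2}]`, and consequently
`F_{n−2} ≥ (n−1)⁻¹ (n F_{n−1} − 1) F_{n−1}`. -/
theorem stmt11 (n : ℕ) (hn : 2 ≤ n) (p : ℕ → ℝ) (hp0 : ∀ k, 0 ≤ p k)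
    (hp1 : ∑ k ∈ Finset.range (n + 1), (n.choose k : ℝ) * p k = 1)
    (F : ℕ → ℝ) (hF : ∀ a, F a = ∑ k ∈ Finset.range (a + 1), (a.choose k : ℝ) * p k)
    (μ : ℕ → ℝ)
    (hμ : ∀ m, μ m = ∑ k ∈ Finset.range (n + 1), (k : ℝ) ^ m * (n.choose k : ℝ) * p k) :
    μ 2 - μ 1 ^ 2 = n * (F (n - 1) - n * F (n - 1) ^ 2 + (n - 1) * F (n - 2)) ∧
      F (n - 2) ≥ ((n : ℝ) - 1)⁻¹ * (n * F (n - 1) - 1) * F (n - 1) := by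
  obtain ⟨m, rfl⟩ : ∃ m, n = m + 2 := ⟨n - 2, by omega⟩
  obtain rfl : F = binomSum p := funext hF
  change binomSum p (m + 2) = 1 at hp1
  have hμ1 : μ 1 = (m + 2) * (1 - binomSum p (m + 1)) := by
    rw [hμ 1]
    simp only [pow_one]
    exact (sum_mul_choose_mul p (m + 1)).trans
      (by rw [show m + 1 + 1 = m + 2 from rfl, hp1]; push_cast; ring)
  have hμ2 : μ 2 = (m + 2) * (1 - binomSum p (m + 1)) +
      (m + 2) * (m + 1) * (1 - 2 * binomSum p (m + 1) + binomSum p m) := by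
    rw [hμ 2, sum_sq_mul_choose_mul, hp1]
  have hformula : μ 2 - μ 1 ^ 2 = (m + 2) * (binomSum p (m + 1) -
      (m + 2) * binomSum p (m + 1) ^ 2 + (m + 1) * binomSum p m) := by
    rw [hμ1, hμ2]; ring
  have hvar : 0 ≤ μ 2 - μ 1 ^ 2 := by
    rw [sub_nonneg, hμ 1, hμ 2]
    simpa only [pow_one, mul_assoc] using sq_sum_mul_le_sum_sq_mul (range (m + 2 + 1))
      (fun k ↦ (k : ℝ)) _ (fun k _ ↦ mul_nonneg (Nat.cast_nonneg _) (hp0 k)) hp1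
  simp only [Nat.add_sub_cancel]
  push_cast
  refine ⟨by rw [hformula]; ring, ?_⟩
  have hX := nonneg_of_mul_nonneg_right (hformula ▸ hvar) (by positivity)
  rw [ge_iff_le, show (m : ℝ) + 2 - 1 = m + 1 by ring, mul_assoc, inv_mul_le_iff₀ (by positivity)]
  linarith
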